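/- For n ≥ 3, the chain x_1 < x_2 < ... < x_n consisting of the partitions x_i with unique non-singleton block [i-1] ∪ {n} is a maximal chain of left-modular elements in the lattice (PE_n, ≤_dref); consequently (PE_n, ≤_dref) is a supersolvable lattice. -/

import Mathlib

/-- A set partition of `[n]` (as a setoid on `Fin n`) is noncrossing. -/
def IsNoncrossing {n : ℕ} (x : Setoid (Fin n)) : Prop :=
  ∀ i j k l : Fin n, i < j → j < k → k < l → x.r i k → x.r j l → x.r i j

/-- `B` is a block of the set partition `x`. -/
def IsBlock {n : ℕ} (x : Setoid (Fin n)) (B : Set (Fin n)) : Prop :=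
  ∃ a, B = {b | x.r a b}

/-- The set partition whose unique (possibly) non-singleton block is `S`. -/
def blockSetoid {n : ℕ} (S : Set (Fin n)) : Setoid (Fin n) where
  r a b := a = b ∨ (a ∈ S ∧ b ∈ S)
  iseqv := by
    refine ⟨fun _ => Or.inl rfl, ?_, ?_⟩
    · rintro a b (rfl | ⟨h1, h2⟩)
      · exact Or.inl rfl
      · exact Or.inr ⟨h2, h1⟩
    · rintro a b c (rfl | ⟨h1, h2⟩) h
      · exact h
      · rcases h with rfl | ⟨h3, h4⟩
        · exact Or.inr ⟨h1, h2⟩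
        · exact Or.inr ⟨h1, h4⟩

/-- The element `x_i` of the left-modular chain: its unique non-singleton block is
`[i-1] ∪ {n}` (in 1-based terms), i.e. the elements with value `< i-1` or value `n-1`. -/
def xChain (n i : ℕ) : Setoid (Fin n) :=
  blockSetoid {a : Fin n | a.val + 1 < i ∨ a.val = n - 1}

/-- The noncrossing closure: the smallest noncrossing partition above `x`. -/
def ncClosure {n : ℕ} (x : Setoid (Fin n)) : Setoid (Fin n) :=
  sInf {y | IsNoncrossing y ∧ x ≤ y}

/-- The join of two noncrossing partitions in `NC_n`. -/
def joinNC {n : ℕ} (x y : Setoid (Fin n)) : Setoid (Fin n) :=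
  ncClosure (x ⊔ y)

/-- The join of a set of noncrossing partitions in `NC_n`. -/
def joinSetNC {n : ℕ} (X : Set (Setoid (Fin n))) : Setoid (Fin n) :=
  ncClosure (sSup X)

/-- Membership in `PE_n`: noncrossing, `{n-1, n}` is not a block, and it is not the case
that `{n}` is a singleton block while `1 ∼ n-1`. -/
def PEmem {n : ℕ} (x : Setoid (Fin n)) : Prop :=
  IsNoncrossing x ∧
  ¬ IsBlock x {a : Fin n | a.val = n - 2 ∨ a.val = n - 1} ∧
  ¬ (IsBlock x {a : Fin n | a.val = n - 1} ∧
      ∃ a b : Fin n, a.val = 0 ∧ b.val = n - 2 ∧ x.r a b)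

/-- `m` is the meet of `x` and `y` in the poset `PE_n`. -/
def IsMeetPE {n : ℕ} (x y m : Setoid (Fin n)) : Prop :=
  PEmem m ∧ m ≤ x ∧ m ≤ y ∧ ∀ z, PEmem z → z ≤ x → z ≤ y → z ≤ m

/-- `j` is the join of `x` and `y` in the poset `PE_n`. -/
def IsJoinPE {n : ℕ} (x y j : Setoid (Fin n)) : Prop :=
  PEmem j ∧ x ≤ j ∧ y ≤ j ∧ ∀ z, PEmem z → x ≤ z → y ≤ z → j ≤ z

/-- `x ⋖ y` in `PE_n`. -/
def CovPE {n : ℕ} (x y : Setoid (Fin n)) : Prop :=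
  PEmem x ∧ PEmem y ∧ x < y ∧ ∀ z, PEmem z → x < z → ¬ z < y

/-- The atoms of `NC_n`: partitions `a_{i,j}` with unique non-singleton block `{i, j}`. -/
def IsAtomNC {n : ℕ} (a : Setoid (Fin n)) : Prop :=
  ∃ i j : Fin n, i < j ∧ a = blockSetoid {i, j}

/-- The partial order `≼` on atoms of `NC_n` induced by the classes
`A_j = {a : a ≤ x_j and a ≰ x_{j-1}}`. -/
def atomPrec {n : ℕ} (a b : Setoid (Fin n)) : Prop :=
  ∃ i j : ℕ, 1 ≤ i ∧ i < j ∧ j ≤ n - 1 ∧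
    (a ≤ xChain n i ∧ ¬ a ≤ xChain n (i - 1)) ∧
    (b ≤ xChain n j ∧ ¬ b ≤ xChain n (j - 1))

/-- A set of atoms of `NC_n` is bounded below (BB). -/
def IsBBset {n : ℕ} (X : Set (Setoid (Fin n))) : Prop :=
  ∀ d ∈ X, ∃ a, IsAtomNC a ∧ atomPrec a d ∧ a < joinSetNC X

/-- A set of atoms of `NC_n` is NBB: no nonempty subset is bounded below. -/
def IsNBBset {n : ℕ} (X : Set (Setoid (Fin n))) : Prop :=
  ∀ Y ⊆ X, Y.Nonempty → ¬ IsBBset Y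

/-- `X` is an NBB base for the top element of `NC_n`. -/
def IsNBBBaseTop {n : ℕ} (X : Set (Setoid (Fin n))) : Prop :=
  (∀ a ∈ X, IsAtomNC a) ∧ IsNBBset X ∧ joinSetNC X = ⊤

/-- The graph `τ(X)` on vertex set `[n]` associated with a set `X` of atoms:
`i` and `j` are adjacent iff `a_{i,j} ∈ X`. -/
def atomGraph {n : ℕ} (X : Set (Setoid (Fin n))) : SimpleGraph (Fin n) where
  Adj i j := i ≠ j ∧ blockSetoid ({i, j} : Set (Fin n)) ∈ X
  symm := ⟨by
    rintro i j ⟨hne, hm⟩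
    exact ⟨hne.symm, by rwa [Set.pair_comm]⟩⟩
  loopless := ⟨fun i h => h.1 rfl⟩

/-- The parking label of the cover `x ⋖ y` is `p`: `y` merges blocks `B₁, B₂` of `x` with
`min B₁ < min B₂`, and `p = max { j ∈ B₁ : j ≤ i for all i ∈ B₂ }`. -/
def ParkingLabelIs {n : ℕ} (x y : Setoid (Fin n)) (p : Fin n) : Prop :=
  ∃ B₁ B₂ : Set (Fin n), IsBlock x B₁ ∧ IsBlock x B₂ ∧ B₁ ≠ B₂ ∧
    IsBlock y (B₁ ∪ B₂) ∧
    (∃ a ∈ B₁, ∀ b ∈ B₂, a < b) ∧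
    p ∈ B₁ ∧ (∀ i ∈ B₂, p ≤ i) ∧ (∀ j ∈ B₁, (∀ i ∈ B₂, j ≤ i) → j ≤ p)

/-- The label of the cover `w ⋖ z` in the `S_n` EL-labeling of `PE_n` coming from the
left-modular chain: `λ(w,z) = min { i-1 : x_i ≰ w and x_i ≤ z }`. -/
def LabelIs (n : ℕ) (w z : Setoid (Fin n)) (v : ℕ) : Prop :=
  ∃ i : ℕ, 1 ≤ i ∧ i ≤ n ∧ i - 1 = v ∧ (¬ xChain n i ≤ w ∧ xChain n i ≤ z) ∧
    ∀ j : ℕ, 1 ≤ j → j ≤ n → (¬ xChain n j ≤ w ∧ xChain n j ≤ z) → i ≤ j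

/-- The sequence of edge labels along a (saturated) chain, recorded as a list. -/
def chainLabels {α Λ : Type*} (lab : α → α → Λ) (c : List α) : List Λ :=
  List.zipWith lab c c.tail

/-- `c` is a saturated chain from `a` to `b` with respect to the cover relation `cov`. -/
def IsSatChainList {α : Type*} (cov : α → α → Prop) (a b : α) (c : List α) : Prop :=
  c.head? = some a ∧ c.getLast? = some b ∧ c.Chain' cov

/-- A chain is rising if its label sequence is strictly increasing. -/
def RisingChain {α Λ : Type*} [LT Λ] (lab : α → α → Λ) (c : List α) : Prop :=
  (chainLabels lab c).Chain' (· < ·)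

/-- `lab` is an EL-labeling with respect to the cover relation `cov` and order `le`:
every interval has a unique rising maximal chain, which is lexicographically least. -/
def IsELLabeling {α Λ : Type*} [PartialOrder Λ] (cov : α → α → Prop) (le : α → α → Prop)
    (lab : α → α → Λ) : Prop :=
  ∀ a b, le a b → ∃ c : List α, IsSatChainList cov a b c ∧ RisingChain lab c ∧
    (∀ c', IsSatChainList cov a b c' → RisingChain lab c' → c' = c) ∧
    (∀ c', IsSatChainList cov a b c' → c' ≠ c →
      List.Lex (· < ·) (chainLabels lab c) (chainLabels lab c'))

/-!
Each `x_{i+1}` arises from `x_i` by moving one singleton into the block of `n`, so the `x_i`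
form a maximal chain from `⊥` to `⊤`.  For left-modularity of `x_i`, merge all blocks of a
noncrossing `y` that meet `[i-1] ∪ {n}`: because `[i-1]` is an initial segment the result is
still noncrossing, and for `i ≥ 2` it relates `1` and `n`, hence lies in `PE_n` and bounds
`y ∨ x_i`.  Below `z ≥ y`, every relation of the merged partition comes from `y` or from
`x_i ∧ z`, which is the noncrossing meet since `n-1` is a singleton of `x_i` for `i < n`.
This gives `(y ∨ x_i) ∧ z ≤ y ∨ (x_i ∧ z)`; the other inequality holds in any lattice.
-/

section Partitions

variable {n : ℕ}

lemma blockSetoid_isNoncrossing (S : Set (Fin n)) : IsNoncrossing (blockSetoid S) := by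
  rintro i j k l hij hjk hkl (rfl | ⟨hi, -⟩) (rfl | ⟨hj, -⟩)
  · exact absurd (hij.trans hjk) (lt_irrefl i)
  · exact absurd (hij.trans hjk) (lt_irrefl i)
  · exact absurd (hjk.trans hkl) (lt_irrefl j)
  · exact Or.inr ⟨hi, hj⟩

lemma IsNoncrossing.inf {x y : Setoid (Fin n)} (hx : IsNoncrossing x) (hy : IsNoncrossing y) :
    IsNoncrossing (x ⊓ y) := fun i j k l hij hjk hkl hik hjl =>
  ⟨hx i j k l hij hjk hkl hik.1 hjl.1, hy i j k l hij hjk hkl hik.2 hjl.2⟩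

lemma blockSetoid_mono {S T : Set (Fin n)} (h : S ⊆ T) : blockSetoid S ≤ blockSetoid T := by
  rintro a b (rfl | ⟨ha, hb⟩)
  exacts [Or.inl rfl, Or.inr ⟨h ha, h hb⟩]

lemma eq_or_eq_of_blockSetoid_le_of_le_insert {S : Set (Fin n)} {s a : Fin n} (hs : s ∈ S)
    {w : Setoid (Fin n)} (hSw : blockSetoid S ≤ w) (hwS : w ≤ blockSetoid (insert a S)) :
    w = blockSetoid S ∨ w = blockSetoid (insert a S) := by
  have rel_s : ∀ b ∈ S, w.r b s := fun b hb => hSw (Or.inr ⟨hb, hs⟩)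
  by_cases has : w.r a s
  · refine Or.inr (le_antisymm hwS ?_)
    have rel_s' : ∀ b ∈ insert a S, w.r b s := by
      rintro b (rfl | hb)
      exacts [has, rel_s b hb]
    rintro b c (rfl | ⟨hb, hc⟩)
    exacts [w.refl' b, w.trans' (rel_s' b hb) (w.symm' (rel_s' c hc))]
  · refine Or.inl (le_antisymm ?_ hSw)
    have mem : ∀ b c, w.r b c → b ≠ c → b ∈ insert a S → c ∈ insert a S → b ∈ S := by
      rintro b c hbc hne (rfl | hb) (rfl | hc)
      exacts [absurd rfl hne, absurd (w.trans' hbc (rel_s c hc)) has, hb, hb]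
    intro b c hbc
    by_cases hne : b = c
    · exact Or.inl hne
    rcases hwS hbc with hbc' | ⟨hb, hc⟩
    · exact Or.inl hbc'
    · exact Or.inr ⟨mem b c hbc hne hb hc, mem c b (w.symm' hbc) (Ne.symm hne) hc hb⟩

/-- This is `y ⊔ blockSetoid S` in the lattice of all partitions, described explicitly. -/
def mergeBlocks (y : Setoid (Fin n)) (S : Set (Fin n)) : Setoid (Fin n) where
  r a b := y.r a b ∨ ((∃ s ∈ S, y.r a s) ∧ ∃ s ∈ S, y.r b s)
  iseqv := by
    refine ⟨fun a => Or.inl (y.refl' a), ?_, ?_⟩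
    · rintro a b (h | ⟨ha, hb⟩)
      exacts [Or.inl (y.symm' h), Or.inr ⟨hb, ha⟩]
    · rintro a b c (hab | ⟨ha, hb⟩) (hbc | ⟨hb', hc⟩)
      · exact Or.inl (y.trans' hab hbc)
      · exact Or.inr ⟨hb'.imp fun s hs => ⟨hs.1, y.trans' hab hs.2⟩, hc⟩
      · exact Or.inr ⟨ha, hb.imp fun s hs => ⟨hs.1, y.trans' (y.symm' hbc) hs.2⟩⟩
      · exact Or.inr ⟨ha, hc⟩

lemma le_mergeBlocks (y : Setoid (Fin n)) (S : Set (Fin n)) : y ≤ mergeBlocks y S :=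
  fun _ _ h => Or.inl h

lemma blockSetoid_le_mergeBlocks (y : Setoid (Fin n)) (S : Set (Fin n)) :
    blockSetoid S ≤ mergeBlocks y S := by
  rintro a b (rfl | ⟨ha, hb⟩)
  exacts [Or.inl (y.refl' a), Or.inr ⟨⟨a, ha, y.refl' a⟩, ⟨b, hb, y.refl' b⟩⟩]

/-- An arc of `y` crossing the merged block either crosses a block of `y` or has an element
of `S` strictly inside it, and then its left end lies in `S` as well. -/
lemma IsNoncrossing.mergeBlocks {y : Setoid (Fin n)} (hy : IsNoncrossing y) {S : Set (Fin n)}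
    (hS : ∀ s ∈ S, ∀ t u, t < s → s < u → t ∈ S) : IsNoncrossing (mergeBlocks y S) := by
  rintro a b c d hab hbc hcd (hac | ⟨haS, s, hs, hcs⟩) (hbd | ⟨⟨s', hs', hbs'⟩, -⟩)
  · exact Or.inl (hy a b c d hab hbc hcd hac hbd)
  · rcases lt_trichotomy s' a with h | rfl | h
    · exact Or.inr ⟨⟨s', hs', y.symm' (hy s' a b c h hab hbc (y.symm' hbs') hac)⟩,
        ⟨s', hs', hbs'⟩⟩
    · exact Or.inl (y.symm' hbs')
    rcases lt_trichotomy s' c with h' | rfl | h'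
    · exact Or.inr ⟨⟨a, hS s' hs' a c h h', y.refl' a⟩, ⟨s', hs', hbs'⟩⟩
    · exact Or.inl (y.trans' hac (y.symm' hbs'))
    · exact Or.inl (hy a b c s' hab hbc h' hac hbs')
  · rcases lt_trichotomy s b with h | rfl | h
    · exact Or.inr ⟨haS, ⟨s, hs, y.symm' (hy s b c d h hbc hcd (y.symm' hcs) hbd)⟩⟩
    · exact Or.inr ⟨haS, ⟨s, hs, y.refl' s⟩⟩
    rcases lt_trichotomy s d with h' | rfl | h'
    · exact Or.inr ⟨haS, ⟨b, hS s hs b d h h', y.refl' b⟩⟩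
    · exact Or.inr ⟨haS, ⟨s, hs, hbd⟩⟩
    · exact Or.inr ⟨haS, ⟨s, hs, y.trans' (hy b c d s hbc hcd h' hbd hcs) hcs⟩⟩
  · exact Or.inr ⟨haS, ⟨s', hs', hbs'⟩⟩

lemma mergeBlocks_inf_le {y z w : Setoid (Fin n)} {S : Set (Fin n)} (hyz : y ≤ z) (hyw : y ≤ w)
    (hSw : blockSetoid S ⊓ z ≤ w) : mergeBlocks y S ⊓ z ≤ w := by
  rintro a b ⟨hab | ⟨⟨s, hs, has⟩, ⟨t, ht, hbt⟩⟩, hzab⟩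
  · exact hyw hab
  · have hzst : z.r s t := z.trans' (z.symm' (hyz has)) (z.trans' hzab (hyz hbt))
    exact w.trans' (hyw has) (w.trans' (hSw ⟨Or.inr ⟨hs, ht⟩, hzst⟩) (w.symm' (hyw hbt)))

end Partitions

section PE

variable {n : ℕ}

lemma IsBlock.mem_of_rel {x : Setoid (Fin n)} {B : Set (Fin n)} (hB : IsBlock x B) {a b : Fin n}
    (hb : b ∈ B) (hab : x.r a b) : a ∈ B := by
  obtain ⟨c, rfl⟩ := hB
  exact x.trans' hb (x.symm' hab)

lemma IsBlock.rel_of_mem {x : Setoid (Fin n)} {B : Set (Fin n)} (hB : IsBlock x B) {a b : Fin n}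
    (ha : a ∈ B) (hb : b ∈ B) : x.r a b := by
  obtain ⟨c, rfl⟩ := hB
  exact x.trans' (x.symm' ha) hb

lemma IsMeetPE.eq_inf {x y m : Setoid (Fin n)} (h : IsMeetPE x y m) (hxy : PEmem (x ⊓ y)) :
    m = x ⊓ y :=
  le_antisymm (le_inf h.2.1 h.2.2.1) (h.2.2.2 _ hxy inf_le_left inf_le_right)

lemma PEmem_of_rel_zero_last (hn : 3 ≤ n) {x : Setoid (Fin n)} (hx : IsNoncrossing x)
    {a b : Fin n} (ha : a.val = 0) (hb : b.val = n - 1) (hab : x.r a b) : PEmem x := by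
  refine ⟨hx, fun hB => ?_, fun ⟨hB, _⟩ => ?_⟩
  · have : a.val = n - 2 ∨ a.val = n - 1 := hB.mem_of_rel (Or.inr hb) hab
    omega
  · have : a.val = n - 1 := hB.mem_of_rel hb hab
    omega

lemma PEmem_of_isolated (hn : 3 ≤ n) {x : Setoid (Fin n)} (hx : IsNoncrossing x)
    (h : ∀ a b : Fin n, a.val = n - 2 → x.r a b → a = b) : PEmem x := by
  refine ⟨hx, fun hB => ?_, fun ⟨_, a, b, ha, hb, hab⟩ => ?_⟩
  · have := congrArg Fin.val (h ⟨n - 2, by omega⟩ ⟨n - 1, by omega⟩ rfl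
      (hB.rel_of_mem (Or.inl rfl) (Or.inr rfl)))
    simp only at this
    omega
  · have := congrArg Fin.val (h b a hb (x.symm' hab))
    omega

end PE

section Chain

variable {n : ℕ}

/-- The non-singleton block of `xChain n i`: the paper's `[i-1] ∪ {n}`, which with the 0-based
labels of `Fin n` is `{0, …, i-2} ∪ {n-1}`. -/
def chainBlock (n i : ℕ) : Set (Fin n) := {a | a.val + 1 < i ∨ a.val = n - 1}

lemma xChain_eq_blockSetoid (n i : ℕ) : xChain n i = blockSetoid (chainBlock n i) := rfl

lemma mem_chainBlock_of_lt {i : ℕ} {s t u : Fin n} (hs : s ∈ chainBlock n i) (hts : t < s)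
    (hsu : s < u) : t ∈ chainBlock n i := by
  have := Fin.lt_def.mp hts
  have := Fin.lt_def.mp hsu
  have := u.isLt
  rcases hs with hs | hs
  · exact Or.inl (by omega)
  · omega

lemma xChain_mono {i j : ℕ} (h : i ≤ j) : xChain n i ≤ xChain n j :=
  blockSetoid_mono fun _ ha => ha.imp_left fun ha => by omega

lemma xChain_eq_bot {i : ℕ} (hi : i ≤ 1) : xChain n i = ⊥ := by
  refine le_bot_iff.mp fun a b hab => ?_
  rcases hab with hab | ⟨ha | ha, hb | hb⟩
  · exact hab
  all_goals first | omega | exact Fin.ext (ha.trans hb.symm)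

lemma xChain_eq_top {i : ℕ} (hi : n ≤ i) : xChain n i = ⊤ :=
  Setoid.eq_top_iff.mpr fun a b => by
    have := a.isLt
    have := b.isLt
    exact Or.inr ⟨show a.val + 1 < i ∨ a.val = n - 1 by omega,
      show b.val + 1 < i ∨ b.val = n - 1 by omega⟩

lemma xChain_rel_zero_last {i : ℕ} (hi : 2 ≤ i) {a b : Fin n} (ha : a.val = 0)
    (hb : b.val = n - 1) : (xChain n i).r a b :=
  Or.inr ⟨Or.inl (by omega), Or.inr hb⟩

lemma xChain_isolated (hn : 2 ≤ n) {i : ℕ} (hi : i < n) (a b : Fin n) (ha : a.val = n - 2)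
    (hab : (xChain n i).r a b) : a = b :=
  hab.resolve_right fun ⟨ha', _⟩ => by rcases ha' with ha' | ha' <;> omega

lemma xChain_lt {i j : ℕ} (hi : 1 ≤ i) (hij : i < j) (hj : j ≤ n) :
    xChain n i < xChain n j := by
  refine lt_of_le_not_ge (xChain_mono hij.le) fun hji => ?_
  rcases hji (Or.inr ⟨Or.inl (by simp only; omega), Or.inr rfl⟩ :
      (xChain n j).r ⟨i - 1, by omega⟩ ⟨n - 1, by omega⟩) with h | ⟨h | h, -⟩
  · have := congrArg Fin.val h
    simp only at this
    omega
  all_goals simp only at h; omega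

lemma xChain_eq_or_eq_succ {j : ℕ} (hj : 1 ≤ j) (hjn : j < n) {w : Setoid (Fin n)}
    (hjw : xChain n j ≤ w) (hwj : w ≤ xChain n (j + 1)) :
    w = xChain n j ∨ w = xChain n (j + 1) := by
  have hinsert : chainBlock n (j + 1) = insert ⟨j - 1, by omega⟩ (chainBlock n j) := by
    ext a
    simp only [chainBlock, Set.mem_insert_iff, Set.mem_ofPred_eq, Fin.ext_iff]
    omega
  simp only [xChain_eq_blockSetoid, hinsert] at hjw hwj ⊢
  exact eq_or_eq_of_blockSetoid_le_of_le_insert (s := ⟨n - 1, by omega⟩) (Or.inr rfl) hjw hwj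

lemma PEmem_xChain (hn : 3 ≤ n) (i : ℕ) : PEmem (xChain n i) := by
  rcases le_or_gt i 1 with hi | hi
  · exact PEmem_of_isolated hn (blockSetoid_isNoncrossing _)
      (xChain_isolated (by omega) (by omega))
  · exact PEmem_of_rel_zero_last hn (blockSetoid_isNoncrossing _) (a := ⟨0, by omega⟩)
      (b := ⟨n - 1, by omega⟩) rfl rfl (xChain_rel_zero_last hi rfl rfl)

lemma PEmem_xChain_inf (hn : 3 ≤ n) (i : ℕ) {z : Setoid (Fin n)} (hz : PEmem z) :
    PEmem (xChain n i ⊓ z) := by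
  rcases le_or_gt n i with hi | hi
  · rwa [xChain_eq_top hi, top_inf_eq]
  · exact PEmem_of_isolated hn ((blockSetoid_isNoncrossing _).inf hz.1)
      fun a b ha hab => xChain_isolated (by omega) hi a b ha hab.1

end Chain

section Supersolvable

variable {n : ℕ}

/-- Left-modularity of `x` in `PE_n`: `(y ∨ x) ∧ z = y ∨ (x ∧ z)` whenever `y ≤ z`. -/
def IsLeftModularPE (x : Setoid (Fin n)) : Prop :=
  ∀ y z : Setoid (Fin n), PEmem y → PEmem z → y ≤ z →
    ∀ q m m' q' : Setoid (Fin n), IsJoinPE y x q → IsMeetPE q z m → IsMeetPE x z m' →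
      IsJoinPE y m' q' → m = q'

lemma IsJoinPE.le_mergeBlocks_chainBlock (hn : 3 ≤ n) {i : ℕ} {y q : Setoid (Fin n)}
    (hy : PEmem y) (hq : IsJoinPE y (xChain n i) q) : q ≤ mergeBlocks y (chainBlock n i) := by
  obtain ⟨-, -, -, hq_least⟩ := hq
  rcases le_or_gt i 1 with hi | hi
  · calc q ≤ y := hq_least y hy le_rfl (by rw [xChain_eq_bot hi]; exact bot_le)
      _ ≤ _ := le_mergeBlocks _ _
  · have hmerge : PEmem (mergeBlocks y (chainBlock n i)) :=
      PEmem_of_rel_zero_last hn (hy.1.mergeBlocks fun _ hs _ _ => mem_chainBlock_of_lt hs)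
        (a := ⟨0, by omega⟩) (b := ⟨n - 1, by omega⟩) rfl rfl
        (blockSetoid_le_mergeBlocks _ _ (xChain_rel_zero_last hi rfl rfl))
    exact hq_least _ hmerge (le_mergeBlocks _ _) (blockSetoid_le_mergeBlocks _ _)

lemma isLeftModularPE_xChain (hn : 3 ≤ n) (i : ℕ) : IsLeftModularPE (xChain n i) := by
  intro y z hy hz hyz q m m' q' hq hm hm' hq'
  obtain ⟨hm_mem, hmq, hmz, hm_greatest⟩ := hm
  have hm'_eq : m' = xChain n i ⊓ z := hm'.eq_inf (PEmem_xChain_inf hn i hz)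
  apply le_antisymm
  · calc m ≤ mergeBlocks y (chainBlock n i) ⊓ z :=
          le_inf (hmq.trans (hq.le_mergeBlocks_chainBlock hn hy)) hmz
      _ ≤ q' := mergeBlocks_inf_le hyz hq'.2.1 (hm'_eq ▸ hq'.2.2.1)
  · have hym : y ≤ m := hm_greatest y hy hq.2.1 hyz
    have hm'm : m' ≤ m := hm_greatest m' hm'.1 (hm'.2.1.trans hq.2.2.1) hm'.2.2.1
    exact hq'.2.2.2 m hm_mem hym hm'm

lemma exists_eq_xChain_of_forall_comparable (hn : 1 ≤ n) {w : Setoid (Fin n)}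
    (h : ∀ k, 1 ≤ k → k ≤ n → w ≤ xChain n k ∨ xChain n k ≤ w) :
    ∃ k, 1 ≤ k ∧ k ≤ n ∧ w = xChain n k := by
  classical
  have hex : ∃ k, 1 ≤ k ∧ w ≤ xChain n k := ⟨n, hn, by rw [xChain_eq_top le_rfl]; exact le_top⟩
  obtain ⟨hk1, hwk⟩ := Nat.find_spec hex
  have hkn : Nat.find hex ≤ n := Nat.find_min' hex ⟨hn, by rw [xChain_eq_top le_rfl]; exact le_top⟩
  rcases eq_or_lt_of_le hk1 with hk | hk
  · rw [← hk, xChain_eq_bot le_rfl] at hwk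
    exact ⟨1, le_rfl, hn, le_bot_iff.mp hwk |>.trans (xChain_eq_bot le_rfl).symm⟩
  obtain ⟨j, hj⟩ : ∃ j, Nat.find hex = j + 1 := ⟨Nat.find hex - 1, by omega⟩
  rw [hj] at hwk hk hkn
  have hjw : xChain n j ≤ w := (h j (by omega) (by omega)).resolve_left fun hwj =>
    Nat.find_min hex (by omega : j < Nat.find hex) ⟨by omega, hwj⟩
  rcases xChain_eq_or_eq_succ (by omega) (by omega) hjw hwk with hw | hw
  exacts [⟨j, by omega, by omega, hw⟩, ⟨j + 1, by omega, hkn, hw⟩]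

lemma isMaxChain_xChain (hn : 3 ≤ n) :
    IsMaxChain (fun a b : {s : Setoid (Fin n) // PEmem s} => a.val ≤ b.val)
      {x : {s : Setoid (Fin n) // PEmem s} | ∃ i, 1 ≤ i ∧ i ≤ n ∧ x.val = xChain n i} := by
  refine ⟨?_, fun t ht hsub => hsub.antisymm fun w hw => ?_⟩
  · rintro a ⟨i, -, -, hi⟩ b ⟨j, -, -, hj⟩ -
    simp only [hi, hj]
    exact (le_total i j).imp xChain_mono xChain_mono
  · refine exists_eq_xChain_of_forall_comparable (by omega) fun k hk1 hkn => ?_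
    have hk : (⟨xChain n k, PEmem_xChain hn k⟩ : {s // PEmem s}) ∈ t := hsub ⟨k, hk1, hkn, rfl⟩
    by_cases hwk : w = ⟨xChain n k, PEmem_xChain hn k⟩
    · exact Or.inl (hwk ▸ le_rfl)
    · exact ht hw hk hwk

end Supersolvable

/-- For `n ≥ 3`, the chain `x_1 < x_2 < ... < x_n` is a maximal chain of
left-modular elements of the (graded) lattice `(PE_n, ≤_dref)`; consequently `PE_n` is a
supersolvable lattice.  Left-modularity of `x_i` is expressed via the lattice operations
of `PE_n`: for `y ≤ z` in `PE_n`, `(y ∨ x_i) ∧ z = y ∨ (x_i ∧ z)`. -/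
theorem PE_supersolvable (n : ℕ) (hn : 3 ≤ n) :
    (∀ i, 1 ≤ i → i ≤ n → PEmem (xChain n i)) ∧
    (∀ i j, 1 ≤ i → i < j → j ≤ n → xChain n i < xChain n j) ∧
    IsMaxChain (fun a b : {s : Setoid (Fin n) // PEmem s} => a.val ≤ b.val)
      {x : {s : Setoid (Fin n) // PEmem s} | ∃ i, 1 ≤ i ∧ i ≤ n ∧ x.val = xChain n i} ∧
    (∀ i, 1 ≤ i → i ≤ n → ∀ y z : Setoid (Fin n), PEmem y → PEmem z → y ≤ z →
      ∀ q m m' q' : Setoid (Fin n), IsJoinPE y (xChain n i) q → IsMeetPE q z m →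
        IsMeetPE (xChain n i) z m' → IsJoinPE y m' q' → m = q') :=
  ⟨fun i _ _ => PEmem_xChain hn i, fun _ _ hi hij hj => xChain_lt hi hij hj,
    isMaxChain_xChain hn, fun i _ _ => isLeftModularPE_xChain hn i⟩
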